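/- If Q is Weihrauch reducible to P, then the first-order part of Q is strongly Weihrauch reducible to the first-order part of P. In particular, Weihrauch equivalent problems have strongly Weihrauch equivalent first-order parts. -/

import Mathlib

open Classical

/-- A Turing functional, presented by a monotone computable map on finite prefixes
of the oracle. -/
structure Functional where
  eval : List ℕ → ℕ → Option ℕ
  mono : ∀ σ τ x y, σ <+: τ → eval σ x = some y → eval τ x = some y
  comp : Computable₂ eval

/-- The finite initial segment of `f` of length `k`. -/
def initSeg (f : ℕ → ℕ) (k : ℕ) : List ℕ := (List.range k).map f

/-- `Φ(f)(x)` converges with value `y`. -/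
def Functional.conv (Φ : Functional) (f : ℕ → ℕ) (x y : ℕ) : Prop :=
  ∃ k, Φ.eval (initSeg f k) x = some y

/-- Total application: `Φ(f) = g`. -/
def Functional.Total (Φ : Functional) (f g : ℕ → ℕ) : Prop :=
  ∀ x, Φ.conv f x (g x)

/-- The Turing join of two elements of Baire space. -/
def join (f g : ℕ → ℕ) : ℕ → ℕ := fun n => if n % 2 = 0 then f (n / 2) else g (n / 2)

/-- The embedding of `ℕ` into Baire space: `n` is identified with `n,0,0,0,…`. -/
def natSeq (n : ℕ) : ℕ → ℕ := fun i => if i = 0 then n else 0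

/-- A problem: a partial multifunction on Baire space, given by its domain
(the set of instances) and, for each instance, its set of solutions. -/
structure Problem where
  dom : Set (ℕ → ℕ)
  sol : (ℕ → ℕ) → Set (ℕ → ℕ)

/-- Weihrauch reducibility `Q ≤_W P`. -/
def WRed (Q P : Problem) : Prop :=
  ∃ Φ Ψ : Functional, ∀ f ∈ Q.dom, ∃ h, Φ.Total f h ∧ h ∈ P.dom ∧
    ∀ g ∈ P.sol h, ∃ y, Ψ.Total (join f g) y ∧ y ∈ Q.sol f

/-- Strong Weihrauch reducibility `Q ≤_sW P`: the backward functional only sees the solution. -/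
def SRed (Q P : Problem) : Prop :=
  ∃ Φ Ψ : Functional, ∀ f ∈ Q.dom, ∃ h, Φ.Total f h ∧ h ∈ P.dom ∧
    ∀ g ∈ P.sol h, ∃ y, Ψ.Total g y ∧ y ∈ Q.sol f

/-- Weihrauch equivalence. -/
def WEquiv (Q P : Problem) : Prop := WRed Q P ∧ WRed P Q

/-- Strong Weihrauch equivalence. -/
def SEquiv (Q P : Problem) : Prop := SRed Q P ∧ SRed P Q

/-- A problem is first-order if all its solutions are natural numbers
(under the identification of `n` with `natSeq n`). -/
def FirstOrder (P : Problem) : Prop :=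
  ∀ f ∈ P.dom, ∀ g ∈ P.sol f, ∃ n, g = natSeq n

/-- The code of a functional as an element of Baire space (the graph of its
prefix-evaluation function). -/
def Functional.graph (Φ : Functional) : ℕ → ℕ :=
  fun n => Encodable.encode (Φ.eval (Denumerable.ofNat (List ℕ) n.unpair.1) n.unpair.2)

/-- The first-order part `¹P` of a problem `P`: instances are (codes of) triples
`⟨f,Φ,Ψ⟩` with `Φ(f) ∈ dom(P)` and `Ψ(f,g)(0)↓` for all `g ∈ P(Φ(f))`; the
solutions are all values `Ψ(f,g)(0)` for `g ∈ P(Φ(f))`. -/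
def FOPart (P : Problem) : Problem where
  dom := { h | ∃ (f : ℕ → ℕ) (Φ Ψ : Functional), h = join f (join Φ.graph Ψ.graph) ∧
    ∃ p, Φ.Total f p ∧ p ∈ P.dom ∧ ∀ g ∈ P.sol p, ∃ y, Ψ.conv (join f g) 0 y }
  sol h := { w | ∃ (f : ℕ → ℕ) (Φ Ψ : Functional) (p g : ℕ → ℕ) (y : ℕ),
    h = join f (join Φ.graph Ψ.graph) ∧ Φ.Total f p ∧ p ∈ P.dom ∧ g ∈ P.sol p ∧
    Ψ.conv (join f g) 0 y ∧ w = natSeq y }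

/-- `P` is computably true: every instance computes one of its solutions. -/
def ComputablyTrue (P : Problem) : Prop :=
  ∀ f ∈ P.dom, ∃ g ∈ P.sol f, ∃ Φ : Functional, Φ.Total f g

/-- `P` is uniformly computably true: a single functional solves every instance. -/
def UnifCompTrue (P : Problem) : Prop :=
  ∃ Φ : Functional, ∀ f ∈ P.dom, ∃ g, Φ.Total f g ∧ g ∈ P.sol f

/-- `σ` is a finite initial segment of some `P`-solution to `f`. -/
def Extendible (P : Problem) (f : ℕ → ℕ) (σ : List ℕ) : Prop :=
  ∃ g ∈ P.sol f, σ = initSeg g σ.length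

/-- `P` is undiagonalizable: the set of strings extendible to a solution is
uniformly decidable from the instance. -/
def Undiag (P : Problem) : Prop :=
  ∃ Γ : Functional, ∀ f ∈ P.dom, ∀ σ : List ℕ,
    (Extendible P f σ → Γ.conv f (Encodable.encode σ) 1) ∧
    (¬ Extendible P f σ → Γ.conv f (Encodable.encode σ) 0)

/-!
Let `(Φ, Ψ)` witness `Q ≤_W P`. An instance `h = ⟨f, A, B⟩` of `¹Q` is sent to the instance
`⟨h, Φ ∘ A, (h, g) ↦ B(f, Ψ(A f, g))⟩` of `¹P`: a solution `g` of `Φ(A f)` yields the `Q`-solution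
`Ψ(A f, g)` of `A f`, so the answers of the new instance are exactly those of `h`, and the backward
functional is the identity. The reduction is strong because everything the backward step needs
about `h` has been packed into the new instance itself. The two new functionals are computable
because Turing functionals are closed under composition and pairing, and because a functional
can be evaluated uniformly from its graph.
-/

open Encodable

lemma initSeg_length (f : ℕ → ℕ) (k : ℕ) : (initSeg f k).length = k := by
  simp [initSeg]

lemma initSeg_getElem? (f : ℕ → ℕ) (k i : ℕ) :
    (initSeg f k)[i]? = if i < k then some (f i) else none := by
  split_ifs <;> simp [initSeg, *]

lemma initSeg_getD (f : ℕ → ℕ) {k i : ℕ} (h : i < k) : (initSeg f k).getD i 0 = f i := by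
  simp [List.getD_eq_getElem?_getD, initSeg_getElem?, h]

lemma initSeg_take (f : ℕ → ℕ) (k n : ℕ) : (initSeg f n).take k = initSeg f (min k n) := by
  simp [initSeg, ← List.map_take]

lemma initSeg_prefix (f : ℕ → ℕ) {k n : ℕ} (h : k ≤ n) : initSeg f k <+: initSeg f n := by
  simpa [initSeg_take, min_eq_left h] using List.take_prefix k (initSeg f n)

lemma join_two_mul (f g : ℕ → ℕ) (n : ℕ) : join f g (2 * n) = f n := by
  simp [join]

lemma join_two_mul_add_one (f g : ℕ → ℕ) (n : ℕ) : join f g (2 * n + 1) = g n := by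
  simp [join, Nat.add_mod, Nat.add_div]

lemma join_injective {f g f' g' : ℕ → ℕ} (h : join f g = join f' g') : f = f' ∧ g = g' :=
  ⟨funext fun n => by simpa [join_two_mul] using congrFun h (2 * n),
    funext fun n => by simpa [join_two_mul_add_one] using congrFun h (2 * n + 1)⟩

def evens (σ : List ℕ) : List ℕ := (List.range ((σ.length + 1) / 2)).map fun i => σ.getD (2 * i) 0

def odds (σ : List ℕ) : List ℕ := (List.range (σ.length / 2)).map fun i => σ.getD (2 * i + 1) 0

lemma evens_initSeg_join (f g : ℕ → ℕ) (n : ℕ) :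
    evens (initSeg (join f g) n) = initSeg f ((n + 1) / 2) := by
  rw [evens, initSeg_length]
  conv_rhs => rw [initSeg]
  refine List.map_congr_left fun i hi => ?_
  rw [List.mem_range] at hi
  rw [initSeg_getD _ (by omega), join_two_mul]

lemma odds_initSeg_join (f g : ℕ → ℕ) (n : ℕ) :
    odds (initSeg (join f g) n) = initSeg g (n / 2) := by
  rw [odds, initSeg_length]
  conv_rhs => rw [initSeg]
  refine List.map_congr_left fun i hi => ?_
  rw [List.mem_range] at hi
  rw [initSeg_getD _ (by omega), join_two_mul_add_one]

lemma primrec_evens : Primrec evens :=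
  Primrec.list_map (Primrec.list_range.comp (Primrec.nat_div.comp
      (Primrec.succ.comp Primrec.list_length) (Primrec.const 2)))
    ((Primrec.list_getD 0).comp Primrec.fst
      (Primrec.nat_mul.comp (Primrec.const 2) Primrec.snd)).to₂

lemma primrec_odds : Primrec odds :=
  Primrec.list_map (Primrec.list_range.comp (Primrec.nat_div.comp Primrec.list_length
      (Primrec.const 2)))
    ((Primrec.list_getD 0).comp Primrec.fst
      (Primrec.succ.comp (Primrec.nat_mul.comp (Primrec.const 2) Primrec.snd))).to₂

namespace Functional

variable (Φ : Functional) {f p : ℕ → ℕ}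

lemma eval_initSeg_unique {x y y' k k' : ℕ} (h : Φ.eval (initSeg f k) x = some y)
    (h' : Φ.eval (initSeg f k') x = some y') : y = y' := by
  have h₁ := Φ.mono _ _ _ _ (initSeg_prefix f (le_max_left k k')) h
  rw [Φ.mono _ _ _ _ (initSeg_prefix f (le_max_right k k')) h'] at h₁
  exact (Option.some_injective _ h₁).symm

variable {Φ}

lemma conv_unique {x y y' : ℕ} (h : Φ.conv f x y) (h' : Φ.conv f x y') : y = y' := by
  obtain ⟨k, hk⟩ := h
  obtain ⟨k', hk'⟩ := h'
  exact Φ.eval_initSeg_unique hk hk'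

lemma Total.eq_of_eval (h : Φ.Total f p) {k x y : ℕ} (he : Φ.eval (initSeg f k) x = some y) :
    y = p x :=
  conv_unique ⟨k, he⟩ (h x)

lemma Total.unique {p' : ℕ → ℕ} (h : Φ.Total f p) (h' : Φ.Total f p') : p = p' :=
  funext fun x => (h x).elim fun _ hk => h'.eq_of_eval hk

lemma Total.exists_eval_initSeg (h : Φ.Total f p) (m : ℕ) :
    ∃ K, ∀ i < m, Φ.eval (initSeg f K) i = some (p i) := by
  induction m with
  | zero => exact ⟨0, by simp⟩
  | succ m ih =>
    obtain ⟨K, hK⟩ := ih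
    obtain ⟨k, hk⟩ := h m
    refine ⟨max K k, fun i hi => ?_⟩
    rcases Nat.lt_succ_iff_lt_or_eq.mp hi with hi | rfl
    · exact Φ.mono _ _ _ _ (initSeg_prefix f (le_max_left K k)) (hK i hi)
    · exact Φ.mono _ _ _ _ (initSeg_prefix f (le_max_right K k)) hk

lemma graph_pair_encode (τ : List ℕ) (x : ℕ) :
    Φ.graph (Nat.pair (encode τ) x) = encode (Φ.eval τ x) := by
  simp [graph]

lemma graph_injective : Function.Injective graph := by
  rintro ⟨e, _, _⟩ ⟨e', _, _⟩ h
  congr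
  funext τ x
  simpa [graph_pair_encode] using congrFun h (Nat.pair (encode τ) x)

lemma computable_graph : Computable Φ.graph :=
  Computable.encode.comp <| Φ.comp.comp
    ((Primrec.ofNat (List ℕ)).comp (Primrec.fst.comp Primrec.unpair)).to_comp
    (Primrec.snd.comp Primrec.unpair).to_comp

end Functional

def readGraph (G τ : List ℕ) (x : ℕ) : Option ℕ :=
  (G[Nat.pair (encode τ) x]?.bind (decode (α := Option ℕ))).join

lemma readGraph_initSeg_graph (Φ : Functional) (N : ℕ) (τ : List ℕ) (x y : ℕ) :
    readGraph (initSeg Φ.graph N) τ x = some y ↔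
      Nat.pair (encode τ) x < N ∧ Φ.eval τ x = some y := by
  simp only [readGraph, initSeg_getElem?]
  split_ifs with h <;> simp [h, Φ.graph_pair_encode]

lemma primrec_readGraph :
    Primrec fun a : (List ℕ × List ℕ) × ℕ => readGraph a.1.1 a.1.2 a.2 := by
  have hlook : Primrec fun a : (List ℕ × List ℕ) × ℕ => a.1.1[Nat.pair (encode a.1.2) a.2]? :=
    Primrec.list_getElem?.comp (Primrec.fst.comp Primrec.fst) <|
      Primrec₂.natPair.comp (Primrec.encode.comp (Primrec.snd.comp Primrec.fst)) Primrec.snd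
  have hdecode := Primrec.option_bind hlook (Primrec.decode (α := Option ℕ) |>.comp Primrec.snd).to₂
  exact (Primrec.option_bind hdecode Primrec.snd.to₂).of_eq fun a => by
    simp [readGraph, Option.join]

lemma computable_map_range {α β : Type} [Primcodable α] [Primcodable β] {F : α → ℕ → β}
    {n : α → ℕ} (hF : Computable₂ F) (hn : Computable n) :
    Computable fun a => (List.range (n a)).map (F a) := by
  refine (Computable.nat_rec hn (Computable.const []) (Computable.list_concat.comp
    (Computable.snd.comp Computable.snd) (hF.comp Computable.fst
      (Computable.fst.comp Computable.snd))).to₂).of_eq fun a => ?_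
  induction n a <;> simp [List.range_succ, *]

lemma List.inits_eq_map_take {α : Type} (l : List α) :
    l.inits = (List.range (l.length + 1)).map l.take :=
  List.ext_getElem (by simp) fun n _ _ => by simp [List.getElem_inits]

def monoEval (e : List ℕ → ℕ → Option ℕ) (σ : List ℕ) (x : ℕ) : Option ℕ :=
  σ.inits.findSome? (e · x)

lemma monoEval_mono (e : List ℕ → ℕ → Option ℕ) {σ τ : List ℕ} (h : σ <+: τ) {x y : ℕ}
    (hy : monoEval e σ x = some y) : monoEval e τ x = some y := by
  rw [List.prefix_iff_eq_take.mp h, monoEval, List.take_inits] at hy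
  exact (List.take_prefix _ _).findSome?_eq_some hy

lemma monoEval_initSeg_eq_some {e : List ℕ → ℕ → Option ℕ} {f : ℕ → ℕ} {n x y : ℕ}
    (h : monoEval e (initSeg f n) x = some y) : ∃ k ≤ n, e (initSeg f k) x = some y := by
  obtain ⟨τ, hτ, he⟩ := List.exists_of_findSome?_eq_some h
  have hτ' := (List.mem_inits _ _).mp hτ
  rw [List.prefix_iff_eq_take, initSeg_take] at hτ'
  refine ⟨_, min_le_right τ.length n, hτ' ▸ he⟩

lemma isSome_monoEval_initSeg {e : List ℕ → ℕ → Option ℕ} {f : ℕ → ℕ} {k n x : ℕ} (hk : k ≤ n)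
    (he : (e (initSeg f k) x).isSome) : (monoEval e (initSeg f n) x).isSome :=
  List.findSome?_isSome_iff.mpr ⟨_, (List.mem_inits _ _).mpr (initSeg_prefix f hk), he⟩

lemma computable_monoEval {α : Type} [Primcodable α] {e : α → List ℕ → ℕ → Option ℕ}
    {σ : α → List ℕ} {x : α → ℕ} (he : Computable₂ fun a τ => e a τ (x a)) (hσ : Computable σ) :
    Computable fun a => monoEval (e a) (σ a) (x a) := by
  have hvals := computable_map_range (F := fun a k => e a ((σ a).take k) (x a))
    (he.comp Computable.fst (Primrec.list_take.to_comp.comp Computable.snd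
      (hσ.comp Computable.fst))).to₂
    (Primrec.succ.to_comp.comp (Primrec.list_length.to_comp.comp hσ))
  have hfirst : Primrec fun l : List (Option ℕ) => (l.filterMap id).head? :=
    Primrec.list_head?.comp (Primrec.listFilterMap Primrec.id Primrec.snd.to₂)
  refine (hfirst.to_comp.comp hvals).of_eq fun a => ?_
  simp [monoEval, List.inits_eq_map_take, List.findSome?_map, Function.comp_def]

def definedPrefix (F : ℕ → Option ℕ) (n : ℕ) : List ℕ :=
  initSeg (fun i => (F i).getD 0) (((List.range n).map F).findIdx Option.isNone)

lemma definedPrefix_eq_initSeg {F : ℕ → Option ℕ} {p : ℕ → ℕ} (hF : ∀ i y, F i = some y → y = p i)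
    (n : ℕ) : definedPrefix F n = initSeg p (definedPrefix F n).length := by
  rw [definedPrefix, initSeg_length]
  refine List.map_congr_left fun i hi => ?_
  have hdef := List.not_of_lt_findIdx (List.mem_range.mp hi)
  simp only [List.getElem_map, List.getElem_range] at hdef
  cases hFi : F i with
  | none => simp [hFi] at hdef
  | some y => rw [Option.getD_some, hF i y hFi]

lemma le_length_definedPrefix {F : ℕ → Option ℕ} {m n : ℕ} (hF : ∀ i < m, (F i).isSome)
    (hmn : m ≤ n) : m ≤ (definedPrefix F n).length := by
  rw [definedPrefix, initSeg_length]
  by_contra! hlt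
  have hundef := List.findIdx_getElem (p := Option.isNone) (xs := (List.range n).map F)
    (w := by rw [List.length_map, List.length_range]; omega)
  simp only [List.getElem_map, List.getElem_range, Option.isNone_iff_eq_none] at hundef
  have hdef := hF _ hlt
  rw [hundef] at hdef
  exact Bool.false_ne_true hdef

lemma computable_definedPrefix {α : Type} [Primcodable α] {F : α → ℕ → Option ℕ} {n : α → ℕ}
    (hF : Computable₂ F) (hn : Computable n) : Computable fun a => definedPrefix (F a) (n a) := by
  have hnone : Primrec₂ fun (_ : List (Option ℕ)) (o : Option ℕ) => o.isNone :=
    (Primrec.not.comp (Primrec.option_isSome.comp Primrec.snd)).of_eq fun _ => Option.not_isSome _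
  exact computable_map_range
    (Computable.option_getD hF (Computable.const 0)).to₂
    ((Primrec.list_findIdx Primrec.id hnone).to_comp.comp (computable_map_range hF hn))

namespace Functional

variable {Φ Ψ : Functional} {f p q : ℕ → ℕ}

def ofEval (e : List ℕ → ℕ → Option ℕ) (he : Computable₂ e) : Functional where
  eval := monoEval e
  mono _ _ _ _ h := monoEval_mono e h
  comp := computable_monoEval (e := fun _ => e) (he.comp Computable.snd
    (Computable.snd.comp Computable.fst)).to₂ Computable.fst

lemma conv_ofEval_iff {e : List ℕ → ℕ → Option ℕ} {he : Computable₂ e} {x y : ℕ}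
    (hcons : ∀ k k' y y', e (initSeg f k) x = some y → e (initSeg f k') x = some y' → y = y') :
    (ofEval e he).conv f x y ↔ ∃ k, e (initSeg f k) x = some y := by
  constructor
  · rintro ⟨n, hn⟩
    obtain ⟨k, -, hk⟩ := monoEval_initSeg_eq_some hn
    exact ⟨k, hk⟩
  · rintro ⟨k, hk⟩
    obtain ⟨y', hy'⟩ := Option.isSome_iff_exists.mp
      (isSome_monoEval_initSeg le_rfl (Option.isSome_iff_exists.mpr ⟨y, hk⟩))
    obtain ⟨k', -, hk'⟩ := monoEval_initSeg_eq_some hy'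
    exact ⟨k, hcons _ _ _ _ hk hk' ▸ hy'⟩

def reindex (r : ℕ → ℕ) (hr : Computable r) : Functional where
  eval σ x := σ[r x]?
  mono σ τ x y h hy := by
    obtain ⟨hlt, rfl⟩ := List.getElem?_eq_some_iff.mp hy
    exact List.prefix_iff_getElem?.mp h _ hlt
  comp := Computable.list_getElem?.comp Computable.fst (hr.comp Computable.snd)

lemma reindex_total {r : ℕ → ℕ} {hr : Computable r} (f : ℕ → ℕ) : (reindex r hr).Total f (f ∘ r) :=
  fun x => ⟨r x + 1, by simp [reindex, initSeg_getElem?]⟩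

protected def id : Functional := reindex _root_.id Computable.id

def fst : Functional := reindex (2 * ·) (Primrec.nat_mul.comp (Primrec.const 2) Primrec.id).to_comp

def snd : Functional :=
  reindex (2 * · + 1)
    (Primrec.succ.comp (Primrec.nat_mul.comp (Primrec.const 2) Primrec.id)).to_comp

lemma id_total (f : ℕ → ℕ) : Functional.id.Total f f := reindex_total f

lemma fst_total (f g : ℕ → ℕ) : fst.Total (join f g) f := by
  have h : fst.Total (join f g) (join f g ∘ (2 * ·)) := reindex_total _
  rwa [show join f g ∘ (2 * ·) = f from funext (join_two_mul f g)] at h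

lemma snd_total (f g : ℕ → ℕ) : snd.Total (join f g) g := by
  have h : snd.Total (join f g) (join f g ∘ (2 * · + 1)) := reindex_total _
  rwa [show join f g ∘ (2 * · + 1) = g from funext (join_two_mul_add_one f g)] at h

def const (c : ℕ → ℕ) (hc : Computable c) : Functional where
  eval _ x := some (c x)
  mono _ _ _ _ _ := _root_.id
  comp := Computable.option_some.comp (hc.comp Computable.snd)

lemma const_total {c : ℕ → ℕ} {hc : Computable c} (f : ℕ → ℕ) : (const c hc).Total f c :=
  fun _ => ⟨0, rfl⟩

def pair (Φ Ψ : Functional) : Functional where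
  eval σ x := if x % 2 = 0 then Φ.eval σ (x / 2) else Ψ.eval σ (x / 2)
  mono σ τ x y h := by
    split_ifs
    exacts [Φ.mono σ τ _ y h, Ψ.mono σ τ _ y h]
  comp := by
    have hhalf : Computable fun a : List ℕ × ℕ => a.2 / 2 :=
      (Primrec.nat_div.comp Primrec.snd (Primrec.const 2)).to_comp
    refine (Computable.cond
      (Primrec.eq.comp (Primrec.nat_mod.comp Primrec.snd (Primrec.const 2))
        (Primrec.const 0)).decide.to_comp
      (Φ.comp.comp Computable.fst hhalf) (Ψ.comp.comp Computable.fst hhalf)).of_eq fun a => ?_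
    by_cases h : a.2 % 2 = 0 <;> simp [h]

lemma pair_total (hΦ : Φ.Total f p) (hΨ : Ψ.Total f q) : (pair Φ Ψ).Total f (join p q) := by
  intro x
  by_cases hx : x % 2 = 0
  · obtain ⟨k, hk⟩ := hΦ (x / 2)
    exact ⟨k, by simp [pair, join, hx, hk]⟩
  · obtain ⟨k, hk⟩ := hΨ (x / 2)
    exact ⟨k, by simp [pair, join, hx, hk]⟩

def compose (Φ Ψ : Functional) : Functional :=
  ofEval (fun σ x => Φ.eval (definedPrefix (Ψ.eval σ) σ.length) x)
    (Φ.comp.comp ((computable_definedPrefix Ψ.comp Computable.list_length).comp Computable.fst)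
      Computable.snd).to₂

lemma compose_conv_iff (hΨ : Ψ.Total f p) {x y : ℕ} : (Φ.compose Ψ).conv f x y ↔ Φ.conv p x y := by
  have hprefix (k : ℕ) : definedPrefix (Ψ.eval (initSeg f k)) (initSeg f k).length =
      initSeg p (definedPrefix (Ψ.eval (initSeg f k)) (initSeg f k).length).length :=
    definedPrefix_eq_initSeg (fun _ _ => hΨ.eq_of_eval) _
  rw [compose, conv_ofEval_iff]
  · constructor
    · rintro ⟨k, hk⟩
      exact ⟨_, hprefix k ▸ hk⟩
    · rintro ⟨m, hm⟩
      obtain ⟨K, hK⟩ := hΨ.exists_eval_initSeg m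
      have hlong : m ≤ (definedPrefix (Ψ.eval (initSeg f (max K m))) (max K m)).length :=
        le_length_definedPrefix (fun i hi => by
          rw [Ψ.mono _ _ _ _ (initSeg_prefix f (le_max_left K m)) (hK i hi)]; rfl)
          (le_max_right K m)
      refine ⟨max K m, ?_⟩
      rw [hprefix, initSeg_length]
      exact Φ.mono _ _ _ _ (initSeg_prefix p hlong) hm
  · intro k k' y y' hk hk'
    rw [hprefix] at hk hk'
    exact Φ.eval_initSeg_unique hk hk'

lemma compose_total (hΨ : Ψ.Total f p) (hΦ : Φ.Total p q) : (Φ.compose Ψ).Total f q :=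
  fun x => (compose_conv_iff hΨ).mpr (hΦ x)

lemma computable_readGraph_evens_odds :
    Computable₂ fun σ x => monoEval (readGraph (evens σ)) (odds σ) x := by
  have he : Computable₂ fun (a : List ℕ × ℕ) (τ : List ℕ) => readGraph (evens a.1) τ a.2 :=
    (primrec_readGraph.to_comp.comp (Computable.pair (Computable.pair
      (primrec_evens.to_comp.comp (Computable.fst.comp Computable.fst)) Computable.snd)
      (Computable.snd.comp Computable.fst))).to₂
  exact computable_monoEval he (primrec_odds.to_comp.comp Computable.fst)

def app : Functional :=
  ofEval (fun σ x => monoEval (readGraph (evens σ)) (odds σ) x) computable_readGraph_evens_odds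

lemma app_conv_iff (A : Functional) (f : ℕ → ℕ) (x y : ℕ) :
    app.conv (join A.graph f) x y ↔ A.conv f x y := by
  have hval (n y : ℕ) (h : monoEval (readGraph (evens (initSeg (join A.graph f) n)))
      (odds (initSeg (join A.graph f) n)) x = some y) : A.conv f x y := by
    rw [evens_initSeg_join, odds_initSeg_join] at h
    obtain ⟨k, -, hk⟩ := monoEval_initSeg_eq_some h
    exact ⟨k, ((readGraph_initSeg_graph A _ _ x y).mp hk).2⟩
  rw [app, conv_ofEval_iff fun k k' y y' hk hk' => conv_unique (hval k y hk) (hval k' y' hk')]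
  refine ⟨fun ⟨n, hn⟩ => hval n y hn, fun ⟨k, hk⟩ => ?_⟩
  -- the graph prefix must be long enough to contain the entry for `(initSeg f k, x)`
  set N := k + Nat.pair (encode (initSeg f k)) x + 1
  have hdef : (readGraph (initSeg A.graph N) (initSeg f k) x).isSome :=
    Option.isSome_iff_exists.mpr ⟨y, (readGraph_initSeg_graph A _ _ x y).mpr ⟨by omega, hk⟩⟩
  obtain ⟨y', hy'⟩ := Option.isSome_iff_exists.mp
    (isSome_monoEval_initSeg (f := f) (n := N) (by omega) hdef)
  have hN : monoEval (readGraph (evens (initSeg (join A.graph f) (2 * N))))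
      (odds (initSeg (join A.graph f) (2 * N))) x = some y' := by
    rwa [evens_initSeg_join, odds_initSeg_join, show (2 * N + 1) / 2 = N by omega,
      show 2 * N / 2 = N by omega]
  exact ⟨2 * N, conv_unique (hval _ _ hN) ⟨k, hk⟩ ▸ hN⟩

lemma app_total {A : Functional} (hA : A.Total f p) : app.Total (join A.graph f) p :=
  fun x => (app_conv_iff A f x (p x)).mpr (hA x)

end Functional

namespace FOPart

open Functional

variable {A B Φ Ψ : Functional} {f g p q z : ℕ → ℕ}

def innerInstance : Functional := app.compose (pair (fst.compose snd) fst)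

lemma innerInstance_total (hA : A.Total f p) (B : Functional) :
    innerInstance.Total (join f (join A.graph B.graph)) p :=
  compose_total (pair_total (compose_total (snd_total _ _) (fst_total _ _)) (fst_total _ _))
    (app_total hA)

def fwd (Φ : Functional) : Functional := Φ.compose innerInstance

lemma fwd_total (hA : A.Total f p) (hΦ : Φ.Total p q) (B : Functional) :
    (fwd Φ).Total (join f (join A.graph B.graph)) q :=
  compose_total (innerInstance_total hA B) hΦ

def bwd (Ψ : Functional) : Functional :=
  app.compose (pair ((snd.compose snd).compose fst)
    (pair (fst.compose fst) (Ψ.compose (pair (innerInstance.compose fst) snd))))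

lemma bwd_conv_iff (hA : A.Total f p) (hΨ : Ψ.Total (join p g) z) {x y : ℕ} :
    (bwd Ψ).conv (join (join f (join A.graph B.graph)) g) x y ↔ B.conv (join f z) x y := by
  have hgraphB := compose_total (fst_total _ g)
    (compose_total (snd_total f _) (snd_total A.graph B.graph))
  have hf := compose_total (fst_total _ g) (fst_total f (join A.graph B.graph))
  have hz := compose_total (pair_total (compose_total (fst_total _ g) (innerInstance_total hA B))
    (snd_total _ g)) hΨ
  rw [bwd, compose_conv_iff (pair_total hgraphB (pair_total hf hz)), app_conv_iff]

def instanceMap (Φ Ψ : Functional) : Functional :=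
  pair Functional.id (pair (const _ (fwd Φ).computable_graph) (const _ (bwd Ψ).computable_graph))

lemma instanceMap_total (Φ Ψ : Functional) (h : ℕ → ℕ) :
    (instanceMap Φ Ψ).Total h (join h (join (fwd Φ).graph (bwd Ψ).graph)) :=
  pair_total (id_total h) (pair_total (const_total h) (const_total h))

lemma code_injective {f f' : ℕ → ℕ} {Φ Φ' Ψ Ψ' : Functional}
    (h : join f (join Φ.graph Ψ.graph) = join f' (join Φ'.graph Ψ'.graph)) :
    f = f' ∧ Φ = Φ' ∧ Ψ = Ψ' := by
  obtain ⟨rfl, hgraphs⟩ := join_injective h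
  obtain ⟨hΦ, hΨ⟩ := join_injective hgraphs
  exact ⟨rfl, graph_injective hΦ, graph_injective hΨ⟩

theorem sRed_of_wRed {P Q : Problem} : WRed Q P → SRed (FOPart Q) (FOPart P) := by
  rintro ⟨Φ, Ψ, hred⟩
  refine ⟨instanceMap Φ Ψ, Functional.id, ?_⟩
  rintro _ ⟨f, A, B, rfl, p, hA, hp, hB⟩
  obtain ⟨q, hΦ, hq, hback⟩ := hred p hp
  refine ⟨_, instanceMap_total Φ Ψ _,
    ⟨_, _, _, rfl, q, fwd_total hA hΦ B, hq, fun g hg => ?_⟩, ?_⟩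
  · obtain ⟨z, hΨ, hz⟩ := hback g hg
    obtain ⟨y, hy⟩ := hB z hz
    exact ⟨y, (bwd_conv_iff hA hΨ).mpr hy⟩
  · rintro _ ⟨_, _, _, q', g, y, hcode, hq', -, hg, hy, rfl⟩
    obtain ⟨rfl, rfl, rfl⟩ := code_injective hcode
    obtain rfl := hq'.unique (fwd_total hA hΦ B)
    obtain ⟨z, hΨ, hz⟩ := hback g hg
    exact ⟨_, id_total _, f, A, B, p, z, y, rfl, hA, hp, hz, (bwd_conv_iff hA hΨ).mp hy, rfl⟩

end FOPart

theorem FOPart_monotone (P Q : Problem) :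
    (WRed Q P → SRed (FOPart Q) (FOPart P)) ∧
      (WEquiv Q P → SEquiv (FOPart Q) (FOPart P)) :=
  ⟨FOPart.sRed_of_wRed, fun h => ⟨FOPart.sRed_of_wRed h.1, FOPart.sRed_of_wRed h.2⟩⟩
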